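/- arXiv:2104.08050 — 2 statements merged into one kernel-verified Lean document; each statement's English description precedes it below -/
import Mathlib

section
/- For λ > 0, μ > 0, the function F(s) = (μ/(s+μ))³ · (λ/(s+λ)) · (s² + 2s(λ+μ) + λ² + λμ + μ²)/(λ² + λμ + μ²) satisfies F(0) = 1 and -F'(0) = (3λ³ + 2λ²μ + 2λμ² + μ³)/(λμ(λ² + λμ + μ²)). -/
open Real

/-! Every factor of `F` takes the value `1` at `0`, so by the product rule `-F'(0)` is the sum of
the negated logarithmic derivatives of the factors: `3/μ + 1/λ - 2(λ+μ)/(λ²+λμ+μ²)`, which over the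
common denominator `λμ(λ²+λμ+μ²)` is the stated fraction. -/

section ProductRuleAtOne

variable {𝕜 𝔸 : Type*} [NontriviallyNormedField 𝕜] [NormedCommRing 𝔸] [NormedAlgebra 𝕜 𝔸]
  {f g : 𝕜 → 𝔸} {f' g' : 𝔸} {x : 𝕜}

theorem HasDerivAt.mul_of_eq_one (hf : HasDerivAt f f' x) (hg : HasDerivAt g g' x)
    (hf1 : f x = 1) (hg1 : g x = 1) :
    HasDerivAt (fun y => f y * g y) (f' + g') x := by
  simpa [hf1, hg1, add_comm] using hf.fun_mul hg

theorem HasDerivAt.pow_of_eq_one (hf : HasDerivAt f f' x) (hf1 : f x = 1) (n : ℕ) :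
    HasDerivAt (fun y => f y ^ n) (n * f') x := by
  simpa [hf1] using hf.fun_pow n

end ProductRuleAtOne

theorem hasDerivAt_const_div_add_const {𝕜 : Type*} [NontriviallyNormedField 𝕜] (c a x : 𝕜)
    (hx : x + a ≠ 0) :
    HasDerivAt (fun s => c / (s + a)) (-c / (x + a) ^ 2) x := by
  simpa [div_eq_mul_inv, neg_div] using ((hasDerivAt_id x).add_const a).inv hx |>.const_mul c

theorem stmt7 (lam mu : ℝ) (hlam : 0 < lam) (hmu : 0 < mu) :
    (fun s : ℝ => (mu / (s + mu))^3 * (lam / (s + lam)) *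
        ((s^2 + 2*s*(lam + mu) + lam^2 + lam*mu + mu^2) / (lam^2 + lam*mu + mu^2))) 0 = 1
    ∧ - deriv (fun s : ℝ => (mu / (s + mu))^3 * (lam / (s + lam)) *
        ((s^2 + 2*s*(lam + mu) + lam^2 + lam*mu + mu^2) / (lam^2 + lam*mu + mu^2))) 0
      = (3*lam^3 + 2*lam^2*mu + 2*lam*mu^2 + mu^3) / (lam * mu * (lam^2 + lam*mu + mu^2)) := by
  have hD : lam^2 + lam*mu + mu^2 ≠ 0 := by positivity
  have hmu' := hasDerivAt_const_div_add_const mu mu 0 (by simpa using hmu.ne')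
  have hlam' := hasDerivAt_const_div_add_const lam lam 0 (by simpa using hlam.ne')
  have hquad : HasDerivAt
      (fun s : ℝ => (s^2 + 2*s*(lam + mu) + lam^2 + lam*mu + mu^2) / (lam^2 + lam*mu + mu^2))
      (2 * (lam + mu) / (lam^2 + lam*mu + mu^2)) 0 := by
    have hpoly := (((((hasDerivAt_id' (0:ℝ)).fun_pow 2).fun_add
      (((hasDerivAt_id' (0:ℝ)).const_mul 2).mul_const (lam + mu))).add_const (lam^2)).add_const
      (lam*mu)).add_const (mu^2)
    exact (hpoly.div_const _).congr_deriv (by norm_num)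
  have hmu1 : mu / (0 + mu) = 1 := by simp [hmu.ne']
  have hlam1 : lam / (0 + lam) = 1 := by simp [hlam.ne']
  have hquad1 : ((0:ℝ)^2 + 2*0*(lam + mu) + lam^2 + lam*mu + mu^2) / (lam^2 + lam*mu + mu^2) = 1 := by
    simp [hD]
  have hF := ((hmu'.pow_of_eq_one hmu1 3).mul_of_eq_one hlam'
    (by simp only [hmu1, one_pow]) hlam1).mul_of_eq_one hquad
    (by simp only [hmu1, hlam1, one_pow, one_mul]) hquad1
  refine ⟨?_, ?_⟩
  · simp only [hmu1, hlam1, hquad1, one_pow, mul_one]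
  · rw [hF.deriv]
    field_simp
    ring
end

section
/- For m > 0, let L_m(s) = 1/(m s e^s + 1). If m < 1 then there exists s₀ > 0 such that L_m''(s) < 0 for all s ∈ (0, s₀); in particular, for m < 1, L_m is not completely monotone on (0,∞) and hence is not the Laplace transform of any nonnegative random variable. -/
/-!
`L_m''(s) = m eˢ (m eˢ (s² + 2s + 2) - (s + 2)) / (m s eˢ + 1)³`, and the second factor of the
numerator equals `2 (m - 1) < 0` at `s = 0`, so `L_m` is strictly concave just to the right of `0`.
Complete monotonicity with `n = 2`, and likewise being a Laplace transform `∫ e^{-sx} dν`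
(whose second derivative is `∫ x² e^{-sx} dν ≥ 0`), would force `L_m'' ≥ 0` there.
-/

open MeasureTheory ProbabilityTheory Real Set Filter Topology

lemma mul_mul_exp_add_one_pos {m : ℝ} (hm0 : 0 ≤ m) (hm : m < exp 1) (s : ℝ) :
    0 < m * s * exp s + 1 := by
  -- `s ↦ s * exp s` attains its minimum `-exp (-1)` at `s = -1`
  have hmin : -s * exp s ≤ exp (-1) := by simpa using mul_exp_neg_le_exp_neg_one (-s)
  have hm' : m * exp (-1) < 1 := by
    calc m * exp (-1) < exp 1 * exp (-1) := by gcongr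
      _ = 1 := by rw [← exp_add]; simp
  nlinarith [mul_le_mul_of_nonneg_left hmin hm0]

lemma iteratedDeriv_two_one_div {𝕜 : Type*} [NontriviallyNormedField 𝕜] {g g' g'' : 𝕜 → 𝕜}
    (hg : ∀ x, HasDerivAt g (g' x) x) (hg' : ∀ x, HasDerivAt g' (g'' x) x)
    (hg0 : ∀ x, g x ≠ 0) (x : 𝕜) :
    iteratedDeriv 2 (fun x => 1 / g x) x = (2 * g' x ^ 2 - g x * g'' x) / g x ^ 3 := by
  have hderiv : deriv (fun x => 1 / g x) = fun x => -g' x / g x ^ 2 := by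
    funext x
    simpa only [one_div] using ((hg x).fun_inv (hg0 x)).deriv
  rw [iteratedDeriv_succ, iteratedDeriv_one, hderiv]
  refine (((hg' x).fun_neg.div ((hg x).fun_pow 2) (pow_ne_zero 2 (hg0 x))).congr_deriv ?_).deriv
  field_simp [hg0 x]
  ring

lemma iteratedDeriv_two_one_div_mul_mul_exp_add_one {m : ℝ} (hm0 : 0 ≤ m) (hm : m < exp 1)
    (s : ℝ) :
    iteratedDeriv 2 (fun s => 1 / (m * s * exp s + 1)) s
      = m * exp s * (m * exp s * (s ^ 2 + 2 * s + 2) - (s + 2)) / (m * s * exp s + 1) ^ 3 := by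
  have hg (x : ℝ) : HasDerivAt (fun s => m * s * exp s + 1) (m * exp x * (1 + x)) x :=
    ((((hasDerivAt_id' x).const_mul m).fun_mul (hasDerivAt_exp x)).add_const 1).congr_deriv
      (by ring)
  have hg' (x : ℝ) : HasDerivAt (fun s => m * exp s * (1 + s)) (m * exp x * (2 + x)) x :=
    (((hasDerivAt_exp x).const_mul m).fun_mul ((hasDerivAt_id' x).const_add 1)).congr_deriv
      (by ring)
  rw [iteratedDeriv_two_one_div hg hg' (fun x => (mul_mul_exp_add_one_pos hm0 hm x).ne')]
  ring

/-- The hypothesis `f t ≠ 0` rules out the junk value `0` of a non-integrable integral. -/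
lemma iteratedDeriv_two_nonneg_of_eqOn_integral_exp {ν : Measure ℝ} {f : ℝ → ℝ} {U : Set ℝ}
    (hU : IsOpen U) (hf : ∀ t ∈ U, ∫ x, exp (-t * x) ∂ν = f t) (hf0 : ∀ t ∈ U, f t ≠ 0)
    {s : ℝ} (hs : s ∈ U) : 0 ≤ iteratedDeriv 2 f s := by
  have hlaplace (t : ℝ) : (fun x => exp (-t * x)) = fun x => exp (t * -x) := by
    funext x; ring_nf
  have hU_sub : U ⊆ integrableExpSet (fun x => -x) ν := fun t ht => by
    have := Integrable.of_integral_ne_zero ((hf t ht).trans_ne (hf0 t ht))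
    rwa [hlaplace] at this
  -- near `s`, `f` is the moment generating function of `-x`, with second derivative
  -- `∫ x² exp (-s x) dν`
  have hf_mgf : f =ᶠ[𝓝 s] mgf (fun x => -x) ν := by
    filter_upwards [hU.mem_nhds hs] with t ht
    rw [← hf t ht, hlaplace, mgf]
  rw [hf_mgf.iteratedDeriv_eq, iteratedDeriv_mgf (interior_mono hU_sub (by rwa [hU.interior_eq]))]
  exact integral_nonneg fun x => by positivity

lemma eventually_iteratedDeriv_two_one_div_mul_mul_exp_add_one_neg {m : ℝ} (hm : 0 < m)
    (hm1 : m < 1) :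
    ∀ᶠ s in 𝓝 0, iteratedDeriv 2 (fun s => 1 / (m * s * exp s + 1)) s < 0 := by
  have hm_exp : m < exp 1 := hm1.trans (one_lt_exp_iff.2 one_pos)
  let φ : ℝ → ℝ := fun s => m * exp s * (s ^ 2 + 2 * s + 2) - (s + 2)
  have hφ : ∀ᶠ s in 𝓝 0, φ s < 0 := by
    refine (by fun_prop : Continuous φ).continuousAt.eventually_lt continuousAt_const ?_
    simp only [φ]
    norm_num
    linarith
  filter_upwards [hφ] with s hs
  rw [iteratedDeriv_two_one_div_mul_mul_exp_add_one hm.le hm_exp]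
  exact div_neg_of_neg_of_pos (mul_neg_of_pos_of_neg (by positivity) hs)
    (pow_pos (mul_mul_exp_add_one_pos hm.le hm_exp s) 3)

theorem stmt15 (m : ℝ) (hm : 0 < m) (hm1 : m < 1) :
    (∃ s₀ > 0, ∀ s ∈ Set.Ioo 0 s₀,
      iteratedDeriv 2 (fun s : ℝ => 1 / (m * s * Real.exp s + 1)) s < 0)
    ∧ ¬ (∀ (n : ℕ) (s : ℝ), 0 < s →
        0 ≤ (-1)^n * iteratedDeriv n (fun s : ℝ => 1 / (m * s * Real.exp s + 1)) s)
    ∧ ¬ ∃ ν : Measure ℝ, IsProbabilityMeasure ν ∧ ν (Set.Iio 0) = 0 ∧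
        ∀ s : ℝ, 0 ≤ s →
          (∫ x, Real.exp (-s * x) ∂ν) = 1 / (m * s * Real.exp s + 1) := by
  obtain ⟨s₀, hs₀, hneg⟩ := mem_nhdsGT_iff_exists_Ioo_subset.1 <| nhdsWithin_le_nhds <|
    eventually_iteratedDeriv_two_one_div_mul_mul_exp_add_one_neg hm hm1
  have hs : s₀ / 2 ∈ Ioo 0 s₀ := ⟨half_pos hs₀, half_lt_self hs₀⟩
  have hpos (t : ℝ) : 0 < m * t * exp t + 1 :=
    mul_mul_exp_add_one_pos hm.le (hm1.trans (one_lt_exp_iff.2 one_pos)) t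
  refine ⟨⟨s₀, hs₀, hneg⟩, fun hcm => ?_, fun ⟨ν, _, _, hν⟩ => ?_⟩
  · have := hcm 2 _ hs.1
    rw [neg_one_sq, one_mul] at this
    exact absurd this (not_le.2 (hneg hs))
  · have := iteratedDeriv_two_nonneg_of_eqOn_integral_exp isOpen_Ioi
      (fun t ht => hν t (le_of_lt ht)) (fun t _ => (one_div_pos.2 (hpos t)).ne') hs.1
    exact absurd this (not_le.2 (hneg hs))
end
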